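/- Let H be an infinite dimensional Hilbert space and X a g-tuple of bounded self-adjoint operators on H such that every nontrivial reducing subspace of X is infinite dimensional. Then for every positive integer N, every nontrivial reducing subspace of the tuple I_N ⊗ X on H^N is infinite dimensional. -/

import Mathlib

/-!
A nonzero vector of `W` has some nonzero coordinate `k`, so the image of `W` under the `k`-th
coordinate projection is a nonzero subspace of `H`. It is invariant under each `X i` because
that projection intertwines `I_N ⊗ X i` with `X i`, and it is finite dimensional if `W` is;
being finite dimensional it is closed, which contradicts the hypothesis on `X`.
-/

set_option maxHeartbeats 1000000
set_option synthInstance.maxHeartbeats 400000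

instance piLpCompleteSpace {ι : Type*} [Fintype ι] (β : ι → Type*)
    [∀ i, UniformSpace (β i)] [∀ i, CompleteSpace (β i)] : CompleteSpace (PiLp 2 β) :=
  (inferInstance : CompleteSpace (PiLp 2 β))

/-- Finite amplification `I_m ⊗ X` acting on `E^m = PiLp 2 (fun _ : Fin m => E)`. -/
noncomputable def amp {E : Type*} [NormedAddCommGroup E] [InnerProductSpace ℂ E]
    (m : ℕ) (X : E →L[ℂ] E) :
    PiLp 2 (fun _ : Fin m => E) →L[ℂ] PiLp 2 (fun _ : Fin m => E) :=
  ((PiLp.continuousLinearEquiv 2 ℂ (fun _ : Fin m => E)).symm.toContinuousLinearMap).comp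
    ((ContinuousLinearMap.pi fun k => X.comp (ContinuousLinearMap.proj k)).comp
      (PiLp.continuousLinearEquiv 2 ℂ (fun _ : Fin m => E)).toContinuousLinearMap)

/-- Membership in the noncommutative convex hull `K_X`: the tuple `Y` (of operators on a
Hilbert space `E`, e.g. `E = H_n`) has the form `V* (I_H ⊗ X) V` for an isometry
`V : E → H^∞`, where `H^∞ = ℓ²(ℕ, H)` and `I_H ⊗ X` is the operator acting
componentwise as `X i` on `H^∞`. -/
noncomputable def InKX {H : Type*} [NormedAddCommGroup H] [InnerProductSpace ℂ H]
    [CompleteSpace H] {g : ℕ} (X : Fin g → H →L[ℂ] H)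
    {E : Type*} [NormedAddCommGroup E] [InnerProductSpace ℂ E] [CompleteSpace E]
    (Y : Fin g → E →L[ℂ] E) : Prop :=
  ∃ V : E →L[ℂ] lp (fun _ : ℕ => H) 2,
    (∀ x, ‖V x‖ = ‖x‖) ∧
    ∀ i, ∃ XA : lp (fun _ : ℕ => H) 2 →L[ℂ] lp (fun _ : ℕ => H) 2,
      (∀ (v : lp (fun _ : ℕ => H) 2) (k : ℕ), XA v k = X i (v k)) ∧
      Y i = ((ContinuousLinearMap.adjoint V).comp (XA.comp V))

/-- `0` is in the finite interior of `K_X`: there are `d ∈ ℕ` and a unit vector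
`v ∈ H^d` with `v* (I_d ⊗ X) v = 0 ∈ ℝ^g`. -/
noncomputable def ZeroFinInt {H : Type*} [NormedAddCommGroup H] [InnerProductSpace ℂ H]
    {g : ℕ} (X : Fin g → H →L[ℂ] H) : Prop :=
  ∃ d : ℕ, 0 < d ∧ ∃ v : PiLp 2 (fun _ : Fin d => H), ‖v‖ = 1 ∧
    ∀ i, (inner ℂ (amp d (X i) v) v : ℂ) = 0

/-- Direct sum `A ⊕ B` of operators, acting on the Hilbert space direct sum
`E ⊕ F = WithLp 2 (E × F)`. -/
noncomputable def dsum {E F : Type*} [NormedAddCommGroup E] [InnerProductSpace ℂ E]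
    [NormedAddCommGroup F] [InnerProductSpace ℂ F]
    (A : E →L[ℂ] E) (B : F →L[ℂ] F) : WithLp 2 (E × F) →L[ℂ] WithLp 2 (E × F) :=
  ((WithLp.prodContinuousLinearEquiv 2 ℂ E F).symm.toContinuousLinearMap).comp
    ((A.prodMap B).comp (WithLp.prodContinuousLinearEquiv 2 ℂ E F).toContinuousLinearMap)

theorem amp_apply {E : Type*} [NormedAddCommGroup E] [InnerProductSpace ℂ E]
    (m : ℕ) (X : E →L[ℂ] E) (v : PiLp 2 (fun _ : Fin m => E)) (k : Fin m) :
    amp m X v k = X (v k) :=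
  rfl

theorem PiLp.exists_map_proj_ne_bot {𝕜 ι : Type*} [Semiring 𝕜] {β : ι → Type*}
    [∀ i, NormedAddCommGroup (β i)] [∀ i, Module 𝕜 (β i)] {p : ENNReal}
    {W : Submodule 𝕜 (PiLp p β)} (hW : W ≠ ⊥) :
    ∃ k, W.map (PiLp.proj p (𝕜 := 𝕜) β k : PiLp p β →ₗ[𝕜] β k) ≠ ⊥ := by
  obtain ⟨w, hwW, hw0⟩ := Submodule.exists_mem_ne_zero_of_ne_bot hW
  obtain ⟨k, hk⟩ : ∃ k, w k ≠ 0 := by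
    by_contra! h
    exact hw0 (PiLp.ext h)
  refine ⟨k, fun hbot => hk ?_⟩
  have hwk : PiLp.proj p (𝕜 := 𝕜) β k w ∈ W.map (PiLp.proj p (𝕜 := 𝕜) β k : PiLp p β →ₗ[𝕜] β k) :=
    Submodule.mem_map_of_mem hwW
  rwa [hbot, Submodule.mem_bot] at hwk

theorem map_proj_mem_of_amp_mem {E : Type*} [NormedAddCommGroup E] [InnerProductSpace ℂ E]
    {m : ℕ} {X : E →L[ℂ] E} {W : Submodule ℂ (PiLp 2 (fun _ : Fin m => E))}
    (hW : ∀ v ∈ W, amp m X v ∈ W) (k : Fin m) :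
    ∀ u ∈ W.map (PiLp.proj 2 (𝕜 := ℂ) (fun _ : Fin m => E) k : PiLp 2 _ →ₗ[ℂ] E), X u ∈
      W.map (PiLp.proj 2 (𝕜 := ℂ) (fun _ : Fin m => E) k : PiLp 2 _ →ₗ[ℂ] E) := by
  rintro _ ⟨v, hvW, rfl⟩
  exact ⟨amp m X v, hW v hvW, amp_apply m X v k⟩

theorem exists_finiteDimensional_invariant_of_amp {E ι : Type*} [NormedAddCommGroup E]
    [InnerProductSpace ℂ E] {m : ℕ} (X : ι → E →L[ℂ] E)
    (W : Submodule ℂ (PiLp 2 (fun _ : Fin m => E))) [FiniteDimensional ℂ W] (hW : W ≠ ⊥)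
    (hWinv : ∀ i, ∀ v ∈ W, amp m (X i) v ∈ W) :
    ∃ U : Submodule ℂ E, FiniteDimensional ℂ U ∧ (∀ i, ∀ u ∈ U, X i u ∈ U) ∧ U ≠ ⊥ := by
  obtain ⟨k, hk⟩ := PiLp.exists_map_proj_ne_bot hW
  exact ⟨_, Module.Finite.map W _, fun i => map_proj_mem_of_amp_mem (hWinv i) k, hk⟩

theorem amplification_reducing_infinite_dimensional_general
    {H : Type*} [NormedAddCommGroup H] [InnerProductSpace ℂ H]
    {g : ℕ} (X : Fin g → H →L[ℂ] H)
    (hred : ∀ W : Submodule ℂ H, IsClosed (W : Set H) →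
      (∀ i, ∀ v ∈ W, X i v ∈ W) → W ≠ ⊥ → ¬ FiniteDimensional ℂ W) :
    ∀ N : ℕ, 0 < N →
      ∀ W : Submodule ℂ (PiLp 2 (fun _ : Fin N => H)), IsClosed (W : Set (PiLp 2 (fun _ : Fin N => H))) →
        (∀ i, ∀ v ∈ W, amp N (X i) v ∈ W) → W ≠ ⊥ → ¬ FiniteDimensional ℂ W := by
  intro N _ W _ hWinv hW hWfd
  obtain ⟨U, hUfd, hUinv, hU⟩ := exists_finiteDimensional_invariant_of_amp X W hW hWinv
  exact hred U U.closed_of_finiteDimensional hUinv hU hUfd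

/-- Lemma 4.1: if every nontrivial reducing subspace of the tuple `X` of
bounded self-adjoint operators on an infinite dimensional Hilbert space `H` is infinite
dimensional, then for every `N`, every nontrivial reducing subspace of `I_N ⊗ X` on
`H^N` is infinite dimensional. -/
theorem amplification_reducing_infinite_dimensional
    {H : Type*} [NormedAddCommGroup H] [InnerProductSpace ℂ H] [CompleteSpace H]
    (hHinf : ¬ FiniteDimensional ℂ H)
    {g : ℕ} (X : Fin g → H →L[ℂ] H) (hXsa : ∀ i, IsSelfAdjoint (X i))
    (hred : ∀ W : Submodule ℂ H, IsClosed (W : Set H) →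
      (∀ i, ∀ v ∈ W, X i v ∈ W) → W ≠ ⊥ → ¬ FiniteDimensional ℂ W) :
    ∀ N : ℕ, 0 < N →
      ∀ W : Submodule ℂ (PiLp 2 (fun _ : Fin N => H)), IsClosed (W : Set (PiLp 2 (fun _ : Fin N => H))) →
        (∀ i, ∀ v ∈ W, amp N (X i) v ∈ W) → W ≠ ⊥ → ¬ FiniteDimensional ℂ W :=
  amplification_reducing_infinite_dimensional_general X hred
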